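/- Let G = G₀(u) ⋄ H(u) be a connected k-uniform hypergraph (k even) with H odd-bipartite, and let x be a first eigenvector of G with x_u = 0. Then ∑_{e ∈ E_{G₀}(u)} ∏_{v ∈ e\{u}} x_v = 0 and ∏_{v ∈ e\{u}} x_v = 0 for every edge e ∈ E_H(u). -/

import Mathlib

open Finset

structure UHG (V : Type) [DecidableEq V] [Fintype V] (k : ℕ) where
  edges : Finset (Finset V)
  uniform : ∀ e ∈ edges, e.card = k

namespace UHG

variable {V : Type} [DecidableEq V] [Fintype V] {k : ℕ}

/-- The vertices of the hypergraph: all vertices covered by some edge. -/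
def verts (G : UHG V k) : Finset V := G.edges.biUnion id

/-- The set of edges containing a given vertex. -/
def incEdges (G : UHG V k) (v : V) : Finset (Finset V) :=
  G.edges.filter fun e => v ∈ e

/-- The degree of a vertex. -/
def deg (G : UHG V k) (v : V) : ℕ := (G.incEdges v).card

/-- Two vertices are adjacent if some edge contains both. -/
def Adj (G : UHG V k) (u v : V) : Prop := ∃ e ∈ G.edges, u ∈ e ∧ v ∈ e

/-- A hypergraph is connected if any two of its vertices are joined by a walk. -/
def Connected (G : UHG V k) : Prop :=
  G.verts.Nonempty ∧ ∀ u ∈ G.verts, ∀ v ∈ G.verts, Relation.ReflTransGen G.Adj u v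

/-- A hypergraph is odd-bipartite if there is a set `U` of vertices such that
every edge meets `U` in an odd number of vertices (the bipartition is `{U, V \ U}`). -/
def OddBipartite (G : UHG V k) : Prop :=
  ∃ U : Finset V, ∀ e ∈ G.edges, Odd (e ∩ U).card

/-- The signless Laplacian form `Q(G) x^k = ∑_{e ∈ E} (∑_{v∈e} x_v^k + k ∏_{v∈e} x_v)`. -/
def Qform (G : UHG V k) (x : V → ℝ) : ℝ :=
  ∑ e ∈ G.edges, ((∑ v ∈ e, x v ^ k) + (k : ℝ) * ∏ v ∈ e, x v)

/-- The H-eigenvector equation for the signless Laplacian tensor: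
`(λ - d(v)) x_v^{k-1} = ∑_{e ∋ v} ∏_{w ∈ e \ {v}} x_w` for every vertex `v`. -/
def eigenEq (G : UHG V k) (lam : ℝ) (x : V → ℝ) : Prop :=
  ∀ v : V, (lam - (G.deg v : ℝ)) * x v ^ (k - 1) =
    ∑ e ∈ G.incEdges v, ∏ w ∈ e.erase v, x w

/-- The least H-eigenvalue of the signless Laplacian tensor. -/
noncomputable def lamMin (G : UHG V k) : ℝ :=
  sInf {lam : ℝ | ∃ x : V → ℝ, x ≠ 0 ∧ G.eigenEq lam x}

/-- A first eigenvector: an H-eigenvector associated with the least H-eigenvalue. -/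
def IsFirstEigenvector (G : UHG V k) (x : V → ℝ) : Prop :=
  x ≠ 0 ∧ G.eigenEq G.lamMin x

/-- `G` is the coalescence `G₀(u) ⋄ H(u)`: its edges are the disjoint union of the
edges of `G₀` and `H`, which share only the vertex `u`. -/
def IsCoalescence (G G₀ H : UHG V k) (u : V) : Prop :=
  G.edges = G₀.edges ∪ H.edges ∧ Disjoint G₀.edges H.edges ∧
  G₀.verts ∩ H.verts ⊆ {u} ∧ u ∈ G₀.verts ∧ u ∈ H.verts

end UHG

/-!
Since `k` is even, `λ_min(G)` is the minimum of `Q(z) / ∑ z_v^k`, and a vector attaining it is a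
first eigenvector (the coordinatewise stationarity conditions are the eigenequations). Because
`x_u = 0`, no edge meets both the restriction `w` of `x` to `V(H) \ {u}` and the rest of `x`, so `Q`
and `∑ x_v^k` split, and `w` attains the minimum as well. Flipping the signs of `|w|` on one side of
an odd bipartition of `H` makes every `H`-edge product nonpositive, so it does not increase `Q`, and
the flipped vector `y` is again a first eigenvector. In its eigenequation at `u` the `G₀`-terms
vanish and each term `∏_{v ∈ e \ {u}} y_v`, `e ∈ E_H(u)`, equals `± |∏_{v ∈ e \ {u}} x_v|` with a
sign depending only on the side of `u`; hence all these products vanish. The eigenequation of `x`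
at `u` then gives the `G₀`-sum.
-/

namespace UHG

variable {V : Type} {k : ℕ}

def edgeTerm (k : ℕ) (x : V → ℝ) (e : Finset V) : ℝ :=
  ∑ v ∈ e, x v ^ k + (k : ℝ) * ∏ v ∈ e, x v

lemma edgeTerm_congr {x y : V → ℝ} {e : Finset V} (h : ∀ j ∈ e, x j = y j) :
    edgeTerm k x e = edgeTerm k y e := by
  rw [edgeTerm, edgeTerm, sum_congr rfl fun j hj => by rw [h j hj], prod_congr rfl h]

lemma edgeTerm_eq_zero (hk0 : k ≠ 0) {x : V → ℝ} {e : Finset V} (he : e.Nonempty)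
    (h : ∀ j ∈ e, x j = 0) : edgeTerm k x e = 0 := by
  obtain ⟨j, hj⟩ := he
  rw [edgeTerm, sum_eq_zero fun v hv => by rw [h v hv, zero_pow hk0], prod_eq_zero hj (h j hj),
    mul_zero, add_zero]

lemma edgeTerm_add (hk0 : k ≠ 0) {y z : V → ℝ} {e : Finset V} (he : e.Nonempty)
    (h : (∀ j ∈ e, y j = 0) ∨ ∀ j ∈ e, z j = 0) :
    edgeTerm k (y + z) e = edgeTerm k y e + edgeTerm k z e := by
  rcases h with h | h
  · rw [edgeTerm_eq_zero hk0 he h, zero_add]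
    exact edgeTerm_congr fun j hj => by simp [h j hj]
  · rw [edgeTerm_eq_zero hk0 he h, add_zero]
    exact edgeTerm_congr fun j hj => by simp [h j hj]

lemma edgeTerm_update [DecidableEq V] (x : V → ℝ) {j : V} {e : Finset V} (hj : j ∈ e) (t : ℝ) :
    edgeTerm k (Function.update x j t) e =
      edgeTerm k x e + (t ^ k - x j ^ k) + k * (t - x j) * ∏ w ∈ e.erase j, x w := by
  rw [edgeTerm, edgeTerm, ← add_sum_erase e _ hj, ← add_sum_erase e (fun v => x v ^ k) hj,
    ← mul_prod_erase e _ hj, ← mul_prod_erase e x hj, Function.update_self,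
    sum_congr rfl fun v hv => by rw [Function.update_of_ne (ne_of_mem_erase hv)],
    prod_congr rfl fun v hv => Function.update_of_ne (ne_of_mem_erase hv) _ _]
  ring

def powSum [Fintype V] (k : ℕ) (x : V → ℝ) : ℝ := ∑ v, x v ^ k

section powSum

variable [Fintype V]

lemma powSum_update [DecidableEq V] (x : V → ℝ) (j : V) (t : ℝ) :
    powSum k (Function.update x j t) = powSum k x + (t ^ k - x j ^ k) := by
  rw [powSum, powSum, ← add_sum_erase _ _ (mem_univ j),
    ← add_sum_erase _ (fun v => x v ^ k) (mem_univ j), Function.update_self,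
    sum_congr rfl fun v hv => by rw [Function.update_of_ne (ne_of_mem_erase hv)]]
  ring

lemma powSum_smul (c : ℝ) (x : V → ℝ) : powSum k (c • x) = c ^ k * powSum k x := by
  simp only [powSum, mul_sum, Pi.smul_apply, smul_eq_mul, mul_pow]

lemma powSum_add (hk0 : k ≠ 0) {y z : V → ℝ} (h : ∀ j, y j = 0 ∨ z j = 0) :
    powSum k (y + z) = powSum k y + powSum k z := by
  rw [powSum, powSum, powSum, ← sum_add_distrib]
  refine sum_congr rfl fun j _ => ?_
  rcases h j with h | h <;> simp [h, zero_pow hk0]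

lemma powSum_pos (hk : Even k) {x : V → ℝ} (hx : x ≠ 0) : 0 < powSum k x := by
  obtain ⟨j, hj⟩ := Function.ne_iff.mp hx
  exact sum_pos' (fun v _ => hk.pow_nonneg _) ⟨j, mem_univ j, hk.pow_pos hj⟩

lemma continuous_powSum : Continuous (powSum k : (V → ℝ) → ℝ) := by
  unfold powSum; fun_prop

end powSum

section signFlip

variable [DecidableEq V]

def sideSign (U : Finset V) (j : V) : ℝ := if j ∈ U then -1 else 1

def signFlip (U : Finset V) (y : V → ℝ) (j : V) : ℝ := sideSign U j * |y j|

lemma sideSign_mul_self (U : Finset V) (j : V) : sideSign U j * sideSign U j = 1 := by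
  unfold sideSign; split_ifs <;> norm_num

lemma abs_sideSign (U : Finset V) (j : V) : |sideSign U j| = 1 := by
  unfold sideSign; split_ifs <;> norm_num

lemma prod_sideSign_of_odd {U e : Finset V} (h : Odd #(e ∩ U)) : ∏ j ∈ e, sideSign U j = -1 := by
  unfold sideSign
  rw [prod_ite, prod_const, prod_const, one_pow, mul_one, filter_mem_eq_inter]
  exact h.neg_one_pow

lemma prod_sideSign_erase_of_odd {U e : Finset V} {u : V} (hu : u ∈ e) (h : Odd #(e ∩ U)) :
    ∏ j ∈ e.erase u, sideSign U j = -sideSign U u := by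
  have := prod_sideSign_of_odd h
  rw [← mul_prod_erase _ _ hu] at this
  linear_combination sideSign U u * this - (∏ j ∈ e.erase u, sideSign U j) * sideSign_mul_self U u

lemma prod_signFlip (U s : Finset V) (y : V → ℝ) :
    ∏ j ∈ s, signFlip U y j = (∏ j ∈ s, sideSign U j) * |∏ j ∈ s, y j| := by
  rw [abs_prod, ← prod_mul_distrib]
  rfl

lemma signFlip_pow (hk : Even k) (U : Finset V) (y : V → ℝ) (j : V) :
    signFlip U y j ^ k = y j ^ k := by
  rw [signFlip, mul_pow, hk.pow_abs, ← hk.pow_abs (sideSign U j), abs_sideSign, one_pow, one_mul]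

lemma signFlip_eq_zero {U : Finset V} {y : V → ℝ} {j : V} (h : y j = 0) : signFlip U y j = 0 := by
  simp [signFlip, h]

lemma powSum_signFlip [Fintype V] (hk : Even k) (U : Finset V) (y : V → ℝ) :
    powSum k (signFlip U y) = powSum k y :=
  sum_congr rfl fun j _ => signFlip_pow hk U y j

lemma edgeTerm_signFlip_le (hk : Even k) {U e : Finset V} {y : V → ℝ}
    (h : Odd #(e ∩ U) ∨ ∀ j ∈ e, y j = 0) : edgeTerm k (signFlip U y) e ≤ edgeTerm k y e := by
  rcases h with h | h
  · rw [edgeTerm, edgeTerm, sum_congr rfl fun j _ => signFlip_pow hk U y j, prod_signFlip,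
      prod_sideSign_of_odd h, neg_one_mul]
    gcongr
    exact neg_abs_le _
  · exact (edgeTerm_congr fun j hj => by rw [signFlip_eq_zero (h j hj), h j hj]).le

end signFlip

variable [DecidableEq V] [Fintype V]

lemma Qform_eq_sum_edgeTerm (G : UHG V k) (x : V → ℝ) :
    G.Qform x = ∑ e ∈ G.edges, edgeTerm k x e := rfl

lemma nonempty_of_mem_edges (hk0 : k ≠ 0) (G : UHG V k) {e : Finset V} (he : e ∈ G.edges) :
    e.Nonempty :=
  card_pos.mp (by rw [G.uniform e he]; omega)

lemma mem_verts (G : UHG V k) {e : Finset V} (he : e ∈ G.edges) {j : V} (hj : j ∈ e) :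
    j ∈ G.verts :=
  mem_biUnion.mpr ⟨e, he, hj⟩

lemma mem_verts_erase {H : UHG V k} {u j : V} {e : Finset V} (he : e ∈ H.edges)
    (hj : j ∈ e.erase u) : j ∈ H.verts.erase u :=
  mem_erase.mpr ⟨ne_of_mem_erase hj, H.mem_verts he (mem_of_mem_erase hj)⟩

lemma sum_sum_incEdges (G : UHG V k) (g : V → Finset V → ℝ) :
    ∑ v, ∑ e ∈ G.incEdges v, g v e = ∑ e ∈ G.edges, ∑ v ∈ e, g v e :=
  sum_comm' fun v e => by simp [incEdges, and_comm]

lemma Qform_update (G : UHG V k) (x : V → ℝ) (j : V) (t : ℝ) :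
    G.Qform (Function.update x j t) = G.Qform x + G.deg j * (t ^ k - x j ^ k) +
      k * (t - x j) * ∑ e ∈ G.incEdges j, ∏ w ∈ e.erase j, x w := by
  rw [Qform_eq_sum_edgeTerm, Qform_eq_sum_edgeTerm, ← sum_filter_add_sum_filter_not _ (j ∈ ·),
    ← sum_filter_add_sum_filter_not G.edges (j ∈ ·) (edgeTerm k x),
    sum_congr rfl fun e he => edgeTerm_update x (mem_filter.1 he).2 t,
    sum_congr rfl fun e he => edgeTerm_congr fun v hv =>
      Function.update_of_ne (ne_of_mem_of_not_mem hv (mem_filter.1 he).2) t x]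
  simp only [sum_add_distrib, sum_const, nsmul_eq_mul, ← mul_sum, deg, incEdges]
  ring

lemma Qform_smul (G : UHG V k) (c : ℝ) (x : V → ℝ) : G.Qform (c • x) = c ^ k * G.Qform x := by
  simp only [Qform, mul_sum, Pi.smul_apply, smul_eq_mul, mul_pow, prod_mul_distrib, prod_const]
  refine sum_congr rfl fun e he => ?_
  rw [G.uniform e he, ← mul_sum]
  ring

lemma Qform_add (hk0 : k ≠ 0) (G : UHG V k) {y z : V → ℝ}
    (h : ∀ e ∈ G.edges, (∀ j ∈ e, y j = 0) ∨ ∀ j ∈ e, z j = 0) :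
    G.Qform (y + z) = G.Qform y + G.Qform z := by
  rw [Qform_eq_sum_edgeTerm, Qform_eq_sum_edgeTerm, Qform_eq_sum_edgeTerm, ← sum_add_distrib]
  exact sum_congr rfl fun e he => edgeTerm_add hk0 (G.nonempty_of_mem_edges hk0 he) (h e he)

lemma Qform_signFlip_le (hk : Even k) (G : UHG V k) {U : Finset V} {y : V → ℝ}
    (h : ∀ e ∈ G.edges, Odd #(e ∩ U) ∨ ∀ j ∈ e, y j = 0) : G.Qform (signFlip U y) ≤ G.Qform y :=
  sum_le_sum fun e he => edgeTerm_signFlip_le hk (h e he)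

lemma continuous_Qform (G : UHG V k) : Continuous G.Qform := by
  unfold Qform; fun_prop

lemma Qform_eq_mul_powSum_of_eigenEq (hk0 : 0 < k) (G : UHG V k) {lam : ℝ} {x : V → ℝ}
    (h : G.eigenEq lam x) : G.Qform x = lam * powSum k x := by
  have hv : ∀ v, lam * x v ^ k - G.deg v * x v ^ k = ∑ e ∈ G.incEdges v, ∏ w ∈ e, x w := by
    intro v
    rw [← sub_mul, ← pow_sub_one_mul hk0.ne', ← mul_assoc, h v, sum_mul]
    exact sum_congr rfl fun e he => by rw [mul_comm, mul_prod_erase _ _ (mem_filter.1 he).2]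
  have hdeg : ∑ v, G.deg v * x v ^ k = ∑ e ∈ G.edges, ∑ v ∈ e, x v ^ k := by
    simp only [← sum_sum_incEdges, sum_const, nsmul_eq_mul, deg]
  have hprod : ∑ v, ∑ e ∈ G.incEdges v, ∏ w ∈ e, x w = ∑ e ∈ G.edges, k * ∏ w ∈ e, x w := by
    rw [sum_sum_incEdges]
    exact sum_congr rfl fun e he => by rw [sum_const, G.uniform e he, nsmul_eq_mul]
  rw [← sum_congr rfl fun v _ => hv v, sum_sub_distrib, ← mul_sum, hdeg] at hprod
  rw [Qform, sum_add_distrib, powSum]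
  linarith

lemma eigenEq_of_forall_mul_powSum_le (hk0 : 0 < k) (G : UHG V k) {m : ℝ} {x : V → ℝ}
    (hmin : ∀ z, m * powSum k z ≤ G.Qform z) (hx : G.Qform x = m * powSum k x) :
    G.eigenEq m x := by
  intro j
  set P := ∑ e ∈ G.incEdges j, ∏ w ∈ e.erase j, x w
  let f : ℝ → ℝ := fun s => (G.deg j - m) * s ^ k + k * P * s
  have hloc : IsLocalMin f (x j) := Filter.Eventually.of_forall fun t => by
    have := hmin (Function.update x j t)
    rw [Qform_update, powSum_update, hx] at this
    simp only [f]
    linarith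
  have hder : HasDerivAt f ((G.deg j - m) * (k * x j ^ (k - 1)) + k * P * 1) (x j) :=
    ((hasDerivAt_pow k (x j)).const_mul _).add ((hasDerivAt_id' (x j)).const_mul _)
  have hk : (k : ℝ) ≠ 0 := Nat.cast_ne_zero.mpr hk0.ne'
  have := hloc.hasDerivAt_eq_zero hder
  apply mul_left_cancel₀ hk
  linear_combination -this

lemma forall_mul_powSum_le_Qform (hk : Even k) (hk0 : 0 < k) (G : UHG V k) {m : ℝ}
    (hm : ∀ z, powSum k z = 1 → m ≤ G.Qform z) (z : V → ℝ) : m * powSum k z ≤ G.Qform z := by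
  rcases eq_or_ne z 0 with rfl | hz
  · have h0 : powSum k (0 : V → ℝ) = 0 := by simp [powSum, zero_pow hk0.ne']
    have h1 : G.Qform 0 = 0 := by simpa [zero_pow hk0.ne'] using G.Qform_smul 0 0
    rw [h0, h1, mul_zero]
  have hpos := powSum_pos hk hz
  set c := (powSum k z)⁻¹ ^ (k : ℝ)⁻¹
  have hc : c ^ k = (powSum k z)⁻¹ := by
    rw [← Real.rpow_natCast, ← Real.rpow_mul (inv_pos.mpr hpos).le,
      inv_mul_cancel₀ (Nat.cast_ne_zero.mpr hk0.ne'), Real.rpow_one]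
  have := hm (c • z) (by rw [powSum_smul, hc, inv_mul_cancel₀ hpos.ne'])
  rwa [Qform_smul, hc, inv_mul_eq_div, le_div_iff₀ hpos] at this

lemma exists_isMinOn_powSum_eq_one [Nonempty V] (hk : Even k) (hk0 : 0 < k) (G : UHG V k) :
    ∃ x, powSum k x = 1 ∧ ∀ z, powSum k z = 1 → G.Qform x ≤ G.Qform z := by
  set S : Set (V → ℝ) := {z | powSum k z = 1}
  have hbdd : Bornology.IsBounded S := by
    refine (Metric.isBounded_iff_subset_closedBall 0).mpr ⟨1, fun z (hz : powSum k z = 1) => ?_⟩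
    rw [mem_closedBall_zero_iff, pi_norm_le_iff_of_nonneg zero_le_one]
    intro v
    have hv : |z v| ^ k ≤ 1 := by
      rw [pow_abs, abs_of_nonneg (hk.pow_nonneg _), ← hz]
      exact single_le_sum (f := fun w => z w ^ k) (fun w _ => hk.pow_nonneg _) (mem_univ v)
    exact (pow_le_one_iff_of_nonneg (abs_nonneg _) hk0.ne').mp hv
  have hcomp : IsCompact S :=
    Metric.isCompact_of_isClosed_isBounded (isClosed_eq continuous_powSum continuous_const) hbdd
  obtain ⟨v⟩ := ‹Nonempty V›
  have hne : S.Nonempty := ⟨Pi.single v 1, by simp [S, powSum, Pi.single_apply, zero_pow hk0.ne']⟩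
  obtain ⟨x, hxS, hx⟩ := hcomp.exists_isMinOn hne G.continuous_Qform.continuousOn
  exact ⟨x, hxS, fun z hz => hx hz⟩

lemma lamMin_mul_powSum_le_Qform [Nonempty V] (hk : Even k) (hk0 : 0 < k) (G : UHG V k)
    (z : V → ℝ) : G.lamMin * powSum k z ≤ G.Qform z := by
  obtain ⟨x, hx1, hx⟩ := G.exists_isMinOn_powSum_eq_one hk hk0
  have hmin := G.forall_mul_powSum_le_Qform hk hk0 hx
  have hx0 : x ≠ 0 := fun h => by simp [h, powSum, zero_pow hk0.ne'] at hx1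
  have hlam : G.lamMin = G.Qform x := by
    have hxeig := G.eigenEq_of_forall_mul_powSum_le hk0 hmin (by rw [hx1, mul_one])
    refine IsLeast.csInf_eq ⟨⟨x, hx0, hxeig⟩, ?_⟩
    rintro μ ⟨y, hy0, hy⟩
    have := hmin y
    rw [G.Qform_eq_mul_powSum_of_eigenEq hk0 hy] at this
    exact le_of_mul_le_mul_right this (powSum_pos hk hy0)
  rw [hlam]
  exact hmin z

namespace IsCoalescence

variable {G G₀ H : UHG V k} {u : V}

lemma mem_edges (hc : IsCoalescence G G₀ H u) {e : Finset V} :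
    e ∈ G.edges ↔ e ∈ G₀.edges ∨ e ∈ H.edges := by
  rw [hc.1, mem_union]

lemma incEdges_eq (hc : IsCoalescence G G₀ H u) (v : V) :
    G.incEdges v = G₀.incEdges v ∪ H.incEdges v := by
  simp only [incEdges, hc.1, filter_union]

lemma disjoint_incEdges (hc : IsCoalescence G G₀ H u) (v : V) :
    Disjoint (G₀.incEdges v) (H.incEdges v) :=
  disjoint_filter_filter hc.2.1

lemma notMem_of_mem_left (hc : IsCoalescence G G₀ H u) {e : Finset V} (he : e ∈ G₀.edges)
    {j : V} (hj : j ∈ e) : j ∉ H.verts.erase u := fun hjH =>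
  ne_of_mem_erase hjH <| mem_singleton.mp <|
    hc.2.2.1 (mem_inter.mpr ⟨G₀.mem_verts he hj, mem_of_mem_erase hjH⟩)

lemma Qform_indicator_eq (hc : IsCoalescence G G₀ H u) (hk0 : k ≠ 0) {m : ℝ}
    (hmin : ∀ z, m * powSum k z ≤ G.Qform z) {x : V → ℝ} (hxu : x u = 0)
    (hx : G.Qform x = m * powSum k x) :
    G.Qform ((H.verts.erase u : Set V).indicator x) =
      m * powSum k ((H.verts.erase u : Set V).indicator x) := by
  set S : Set V := ↑(H.verts.erase u)
  have hedge : ∀ e ∈ G.edges, (∀ j ∈ e, S.indicator x j = 0) ∨ ∀ j ∈ e, Sᶜ.indicator x j = 0 := by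
    intro e he
    rcases hc.mem_edges.mp he with he | he
    · exact Or.inl fun j hj => Set.indicator_of_notMem (hc.notMem_of_mem_left he hj) x
    · refine Or.inr fun j hj => ?_
      by_cases hju : j = u
      · simp [hju, hxu]
      · exact Set.indicator_of_notMem (not_not.mpr (mem_verts_erase he (mem_erase.mpr ⟨hju, hj⟩))) x
  have hvert : ∀ j, S.indicator x j = 0 ∨ Sᶜ.indicator x j = 0 := fun j => by
    by_cases hj : j ∈ S <;> simp [hj]
  have hQ := G.Qform_add hk0 hedge
  have hP := powSum_add hk0 hvert
  rw [S.indicator_self_add_compl x] at hQ hP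
  rw [hQ, hP, mul_add] at hx
  linarith [hmin (S.indicator x), hmin (Sᶜ.indicator x)]

lemma Qform_signFlip_indicator_le (hc : IsCoalescence G G₀ H u) (hk : Even k) {U : Finset V}
    (hU : ∀ e ∈ H.edges, Odd #(e ∩ U)) (x : V → ℝ) :
    G.Qform (signFlip U ((H.verts.erase u : Set V).indicator x)) ≤
      G.Qform ((H.verts.erase u : Set V).indicator x) :=
  G.Qform_signFlip_le hk fun e he => (hc.mem_edges.mp he).symm.imp (hU e) fun he _ hj =>
    Set.indicator_of_notMem (hc.notMem_of_mem_left he hj) x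

lemma prod_erase_eq_zero (hc : IsCoalescence G G₀ H u) (hk1 : 1 < k) {U : Finset V}
    (hU : ∀ e ∈ H.edges, Odd #(e ∩ U)) {lam : ℝ} {x : V → ℝ}
    (heig : G.eigenEq lam (signFlip U ((H.verts.erase u : Set V).indicator x))) :
    ∀ e ∈ H.incEdges u, ∏ j ∈ e.erase u, x j = 0 := by
  set S : Set V := ↑(H.verts.erase u)
  set y := signFlip U (S.indicator x)
  have hyu : y u = 0 := signFlip_eq_zero (Set.indicator_of_notMem (by simp [S]) x)
  have hG₀ : ∀ e ∈ G₀.incEdges u, ∏ j ∈ e.erase u, y j = 0 := by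
    intro e he
    obtain ⟨he, hue⟩ := mem_filter.mp he
    obtain ⟨j, hj⟩ : (e.erase u).Nonempty := by
      rw [← card_pos, card_erase_of_mem hue, G₀.uniform e he]; omega
    exact prod_eq_zero hj <| signFlip_eq_zero <|
      Set.indicator_of_notMem (hc.notMem_of_mem_left he (mem_of_mem_erase hj)) x
  have hH : ∀ e ∈ H.incEdges u, ∏ j ∈ e.erase u, y j = -sideSign U u * |∏ j ∈ e.erase u, x j| := by
    intro e he
    obtain ⟨he, hue⟩ := mem_filter.mp he
    rw [prod_signFlip, prod_sideSign_erase_of_odd hue (hU e he),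
      prod_congr rfl fun j hj => Set.indicator_of_mem (mem_verts_erase he hj) x]
  have hsum := heig u
  rw [hyu, zero_pow (by omega), mul_zero, hc.incEdges_eq, sum_union (hc.disjoint_incEdges u),
    sum_eq_zero hG₀, zero_add, sum_congr rfl hH, ← mul_sum] at hsum
  have hsign : -sideSign U u ≠ 0 := by
    rw [neg_ne_zero, ← abs_pos, abs_sideSign]; exact one_pos
  have habs := (mul_eq_zero.mp hsum.symm).resolve_left hsign
  intro e he
  exact abs_eq_zero.mp ((sum_eq_zero_iff_of_nonneg fun _ _ => abs_nonneg _).mp habs e he)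

end IsCoalescence

end UHG

theorem stmt9_general {V : Type} [DecidableEq V] [Fintype V] {k : ℕ}
    (hk : Even k) (hk0 : 0 < k) (G G₀ H : UHG V k) (u : V)
    (hcoal : UHG.IsCoalescence G G₀ H u) (hH : H.OddBipartite)
    (x : V → ℝ) (hx : G.IsFirstEigenvector x) (hxu : x u = 0) :
    (∑ e ∈ G₀.incEdges u, ∏ w ∈ e.erase u, x w) = 0 ∧
      ∀ e ∈ H.incEdges u, (∏ w ∈ e.erase u, x w) = 0 := by
  have : Nonempty V := ⟨u⟩
  obtain ⟨-, hxeig⟩ := hx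
  obtain ⟨U, hU⟩ := hH
  have hk1 : 1 < k := by obtain ⟨n, rfl⟩ := hk; omega
  have hmin := G.lamMin_mul_powSum_le_Qform hk hk0
  set w := (H.verts.erase u : Set V).indicator x
  have hw : G.Qform w = G.lamMin * UHG.powSum k w :=
    hcoal.Qform_indicator_eq hk0.ne' hmin hxu (G.Qform_eq_mul_powSum_of_eigenEq hk0 hxeig)
  have hflip : G.eigenEq G.lamMin (UHG.signFlip U w) := by
    refine G.eigenEq_of_forall_mul_powSum_le hk0 hmin (le_antisymm ?_ (hmin _))
    rw [UHG.powSum_signFlip hk, ← hw]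
    exact hcoal.Qform_signFlip_indicator_le hk hU x
  have hHu := hcoal.prod_erase_eq_zero hk1 hU hflip
  refine ⟨?_, hHu⟩
  have hxu_eq := hxeig u
  rw [hxu, zero_pow (by omega), mul_zero, hcoal.incEdges_eq, sum_union (hcoal.disjoint_incEdges u),
    sum_eq_zero hHu, add_zero] at hxu_eq
  exact hxu_eq.symm

/-- Let `G = G₀(u) ⋄ H(u)` be a connected `k`-uniform hypergraph (`k` even)
with `H` odd-bipartite, and let `x` be a first eigenvector of `G` with `x_u = 0`. Then
`∑_{e ∈ E_{G₀}(u)} ∏_{v ∈ e \ {u}} x_v = 0`, and `∏_{v ∈ e \ {u}} x_v = 0` for every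
edge `e ∈ E_H(u)`. -/
theorem stmt9 {V : Type} [DecidableEq V] [Fintype V] {k : ℕ}
    (hk : Even k) (hk0 : 0 < k) (G G₀ H : UHG V k) (u : V)
    (hcoal : UHG.IsCoalescence G G₀ H u) (hH : H.OddBipartite) (hconn : G.Connected)
    (x : V → ℝ) (hx : G.IsFirstEigenvector x) (hxu : x u = 0) :
    (∑ e ∈ G₀.incEdges u, ∏ w ∈ e.erase u, x w) = 0 ∧
      ∀ e ∈ H.incEdges u, (∏ w ∈ e.erase u, x w) = 0 :=
  stmt9_general hk hk0 G G₀ H u hcoal hH x hx hxu
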